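/- In the construction of Theorem 3 with k extra variables, let w = (1/3)^{n+j+k+1} where n = |enc(φ')|. Then Z(enc(φ')·0) = w and Z(enc(φ')·1) = w · 2^{k−1} · #(φ). Consequently, p(0 | enc(φ')) = 1 if φ is unsatisfiable, and p(0 | enc(φ')) ≤ 1/(1 + 2^{k−1}) if φ is satisfiable. -/

import Mathlib

/-- Boolean formulas over variables `A_0, A_1, …` (0-indexed), with a truth constant. -/
inductive Fm : Type
  | tru : Fm
  | var : ℕ → Fm
  | not : Fm → Fm
  | and : Fm → Fm → Fm
  | or : Fm → Fm → Fm

/-- Evaluation of a formula under an assignment `σ`. -/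
def Fm.eval (σ : ℕ → Bool) : Fm → Bool
  | .tru => true
  | .var i => σ i
  | .not φ => !(φ.eval σ)
  | .and φ ψ => φ.eval σ && ψ.eval σ
  | .or φ ψ => φ.eval σ || ψ.eval σ

/-- `Shift(φ)`: rename each variable `A_i` to `A_{i+1}`. -/
def Fm.shift : Fm → Fm
  | .tru => .tru
  | .var i => .var (i + 1)
  | .not φ => .not φ.shift
  | .and φ ψ => .and φ.shift ψ.shift
  | .or φ ψ => .or φ.shift ψ.shift

/-- The conjunction `¬A_0 ∧ ⋯ ∧ ¬A_{n-1}`. -/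
def allFalse : ℕ → Fm
  | 0 => .tru
  | n + 1 => .and (allFalse n) (.not (.var n))

/-- `φ` is a formula on the variables `A_0, …, A_{j-1}`: its value depends only on them. -/
def onlyUses (j : ℕ) (φ : Fm) : Prop :=
  ∀ σ σ' : ℕ → Bool, (∀ i < j, σ i = σ' i) → φ.eval σ = φ.eval σ'

/-- An assignment `a ∈ {0,1}^n` satisfies `φ`. -/
def satN {n : ℕ} (a : Fin n → Bool) (φ : Fm) : Prop :=
  φ.eval (fun i => if h : i < n then a ⟨i, h⟩ else false) = true

instance {n : ℕ} (a : Fin n → Bool) (φ : Fm) : Decidable (satN a φ) :=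
  inferInstanceAs (Decidable (_ = true))

open scoped ENNReal

/-- `#(φ)`: the number of satisfying assignments of `φ` in `{0,1}^n`. -/
def countSat (n : ℕ) (φ : Fm) : ℕ :=
  (Finset.univ.filter fun a : Fin n → Bool => satN a φ).card

/-- A binary string `a` (read as an assignment of `A_0, A_1, …`, padded with `false`)
satisfies `φ`. -/
def satL (a : List Bool) (φ : Fm) : Prop :=
  φ.eval (fun i => a.getD i false) = true

/-- `φ' = (¬A_0 ∧ ⋯ ∧ ¬A_{j+k-1}) ∨ (A_0 ∧ Shift(φ))`, on `j + k` variables. -/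
def phiK (j k : ℕ) (φ : Fm) : Fm :=
  .or (allFalse (j + k)) (.and (.var 0) φ.shift)

/-!
Since `enc` is prefix-free, a string of nonzero weight extending `enc φ' ++ u` is
`enc φ' ++ a` for a satisfying assignment `a` of `φ'` on `j + k` variables, and each of these
weighs `w`; hence `Z (enc φ' ++ u) = w · #{a ⊨ φ' | u ⊑ a}`. The satisfying assignments of `φ'`
are `0^{j+k}`, the only one starting with `0`, and the `2^{k-1} · #(φ)` strings `1·b·c` with
`b ⊨ φ`.
-/

open Finset

theorem Fm.eval_allFalse (σ : ℕ → Bool) (m : ℕ) :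
    (allFalse m).eval σ = true ↔ ∀ i < m, σ i = false := by
  induction m with
  | zero => simp [allFalse, Fm.eval]
  | succ m ih =>
    simp only [allFalse, Fm.eval, Bool.and_eq_true, ih, Bool.not_eq_true']
    exact ⟨fun ⟨h, hm⟩ i hi => (Nat.lt_succ_iff_lt_or_eq.mp hi).elim (h i) (· ▸ hm),
      fun h => ⟨fun i hi => h i (by omega), h m (by omega)⟩⟩

theorem Fm.eval_shift (φ : Fm) (σ : ℕ → Bool) :
    φ.shift.eval σ = φ.eval fun i => σ (i + 1) := by
  induction φ <;> simp_all [Fm.shift, Fm.eval]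

theorem satL_ofFn {m : ℕ} (a : Fin m → Bool) (ψ : Fm) : satL (List.ofFn a) ψ ↔ satN a ψ := by
  have : (fun i => (List.ofFn a).getD i false)
      = fun i => if h : i < m then a ⟨i, h⟩ else false := by
    funext i
    split_ifs with h <;> simp [h]
  rw [satL, satN, this]

theorem satN_phiK_iff {j k : ℕ} {φ : Fm} (hφ : onlyUses j φ) (a : Fin (j + k + 1) → Bool) :
    satN a (phiK j (k + 1) φ) ↔
      (∀ i, a i = false) ∨ (a 0 = true ∧ satN (fun i => a (Fin.castAdd k i).succ) φ) := by
  have hzero :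
      (allFalse (j + (k + 1))).eval (fun i => if h : i < j + k + 1 then a ⟨i, h⟩ else false)
        = true ↔ ∀ i, a i = false := by
    rw [Fm.eval_allFalse]
    exact ⟨fun h i => by simpa [Nat.le_of_lt_succ i.isLt] using h i i.isLt,
      fun h i _ => by simp [h]⟩
  have hshift : φ.shift.eval (fun i => if h : i < j + k + 1 then a ⟨i, h⟩ else false)
      = φ.eval fun i => if h : i < j then a (Fin.castAdd k ⟨i, h⟩).succ else false := by
    rw [Fm.eval_shift]
    refine hφ _ _ fun i hi => ?_
    simp only [hi, dite_true, show i + 1 < j + k + 1 by omega]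
    rfl
  simp only [satN, phiK, Fm.eval, Bool.or_eq_true, Bool.and_eq_true, hzero, hshift]
  simp

theorem card_filter_head_eq_and_castAdd {α : Type*} [Fintype α] [DecidableEq α] {m n : ℕ}
    (x : α) (p : (Fin m → α) → Prop) [DecidablePred p] :
    #{a : Fin (m + n + 1) → α | a 0 = x ∧ p fun i => a (Fin.castAdd n i).succ}
      = #{b : Fin m → α | p b} * Fintype.card α ^ n := by
  let e : α × (Fin m → α) × (Fin n → α) ≃ (Fin (m + n + 1) → α) :=
    (Equiv.prodCongrRight fun _ => Fin.appendEquiv m n).trans (Fin.consEquiv fun _ => α)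
  rw [card_equiv e.symm (t := {x} ×ˢ (univ.filter p ×ˢ univ))
    fun a => by simp [e, Fin.tail, eq_comm, and_comm]]
  simp [card_product]

section PrefixFreeCode

variable {enc : Fm → List Bool} {nv : Fm → ℕ} {pt : List Bool → ℝ≥0∞}

theorem exists_eq_enc_append_ofFn_of_ne_zero (hpf : ∀ φ ψ : Fm, enc φ <+: enc ψ → φ = ψ)
    (hpt0 : ∀ x : List Bool,
      (¬ ∃ (ψ : Fm) (a : List Bool), x = enc ψ ++ a ∧ a.length = nv ψ ∧ satL a ψ) → pt x = 0)
    {ψ : Fm} {m : ℕ} (hm : nv ψ = m) {x : List Bool} (hψx : enc ψ <+: x) (hx : pt x ≠ 0) :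
    ∃ a : Fin m → Bool, satN a ψ ∧ x = enc ψ ++ List.ofFn a := by
  obtain ⟨ψ', b, rfl, hb, hsat⟩ := not_not.mp (mt (hpt0 x) hx)
  obtain rfl : ψ' = ψ :=
    (List.prefix_or_prefix_of_prefix (List.prefix_append _ _) hψx).elim (hpf _ _)
      fun h => (hpf _ _ h).symm
  obtain rfl : b.length = m := hb.trans hm
  exact ⟨b.get, by rwa [← satL_ofFn, List.ofFn_get], by rw [List.ofFn_get]⟩

theorem tsum_prefix_enc_append (hpf : ∀ φ ψ : Fm, enc φ <+: enc ψ → φ = ψ)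
    (hpt1 : ∀ (ψ : Fm) (a : List Bool), a.length = nv ψ → satL a ψ →
      pt (enc ψ ++ a) = (1 / 3 : ℝ≥0∞) ^ ((enc ψ ++ a).length + 1))
    (hpt0 : ∀ x : List Bool,
      (¬ ∃ (ψ : Fm) (a : List Bool), x = enc ψ ++ a ∧ a.length = nv ψ ∧ satL a ψ) → pt x = 0)
    {ψ : Fm} {m : ℕ} (hm : nv ψ = m) (u : List Bool) :
    ∑' x : {x : List Bool // enc ψ ++ u <+: x}, pt x.1
      = #{a : Fin m → Bool | satN a ψ ∧ u <+: List.ofFn a}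
          * (1 / 3 : ℝ≥0∞) ^ ((enc ψ).length + m + 1) := by
  set S : Finset (Fin m → Bool) := {a | satN a ψ ∧ u <+: List.ofFn a}
  have hmem {a : Fin m → Bool} : a ∈ S ↔ satN a ψ ∧ u <+: List.ofFn a := by simp [S]
  have hval : ∀ a ∈ S, {x | enc ψ ++ u <+: x}.indicator pt (enc ψ ++ List.ofFn a)
      = (1 / 3) ^ ((enc ψ).length + m + 1) := fun a ha => by
    obtain ⟨hsat, hu⟩ := hmem.1 ha
    rw [Set.indicator_of_mem (s := {x | enc ψ ++ u <+: x})
        ((List.prefix_append_right_inj _).2 hu),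
      hpt1 ψ _ (by simp [hm]) ((satL_ofFn a ψ).2 hsat)]
    simp [add_assoc]
  refine (tsum_subtype {x | enc ψ ++ u <+: x} pt).trans ?_
  rw [tsum_eq_sum (s := S.image (enc ψ ++ List.ofFn ·)), sum_image, sum_congr rfl hval,
    sum_const, nsmul_eq_mul]
  · exact fun a _ b _ h => List.ofFn_injective (List.append_cancel_left h)
  · intro x hx
    refine Set.indicator_apply_eq_zero.2 fun hux => ?_
    by_contra hne
    obtain ⟨a, hsat, rfl⟩ :=
      exists_eq_enc_append_ofFn_of_ne_zero hpf hpt0 hm ((List.prefix_append _ _).trans hux) hne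
    exact hx (mem_image_of_mem _ (hmem.2 ⟨hsat, (List.prefix_append_right_inj _).1 hux⟩))

end PrefixFreeCode

theorem singleton_prefix_ofFn_iff {α : Type*} {n : ℕ} (a : Fin (n + 1) → α) (c : α) :
    [c] <+: List.ofFn a ↔ a 0 = c := by
  rw [List.ofFn_succ, List.cons_prefix_cons]
  simp [eq_comm]

section PhiK

variable {j k : ℕ} {φ : Fm}

theorem card_satN_phiK_head_false (hφ : onlyUses j φ) :
    #{a : Fin (j + k + 1) → Bool | satN a (phiK j (k + 1) φ) ∧ [false] <+: List.ofFn a} = 1 := by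
  rw [card_eq_one]
  refine ⟨fun _ => false, ext fun a => ?_⟩
  simp only [mem_filter, mem_univ, true_and, mem_singleton, satN_phiK_iff hφ,
    singleton_prefix_ofFn_iff, funext_iff]
  constructor
  · rintro ⟨h | ⟨h, -⟩, h0⟩
    exacts [h, by simp [h] at h0]
  · exact fun h => ⟨.inl h, h 0⟩

theorem card_satN_phiK_head_true (hφ : onlyUses j φ) :
    #{a : Fin (j + k + 1) → Bool | satN a (phiK j (k + 1) φ) ∧ [true] <+: List.ofFn a}
      = countSat j φ * 2 ^ k := by
  have := card_filter_head_eq_and_castAdd (m := j) (n := k) true fun b : Fin j → Bool => satN b φ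
  rw [Fintype.card_bool] at this
  rw [countSat, ← this]
  congr 1
  refine filter_congr fun a _ => ?_
  rw [satN_phiK_iff hφ, singleton_prefix_ofFn_iff]
  constructor
  · rintro ⟨h | h, h0⟩
    exacts [by simp [h] at h0, h]
  · exact fun h => ⟨.inr h, h.1⟩

theorem card_satN_phiK (hφ : onlyUses j φ) :
    #{a : Fin (j + k + 1) → Bool | satN a (phiK j (k + 1) φ)} = 1 + countSat j φ * 2 ^ k := by
  have hfalse := card_satN_phiK_head_false (k := k) hφ
  have htrue := card_satN_phiK_head_true (k := k) hφ
  simp only [singleton_prefix_ofFn_iff] at hfalse htrue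
  rw [← card_filter_add_card_filter_not (fun a : Fin (j + k + 1) → Bool => a 0 = false)]
  simp only [filter_filter, Bool.not_eq_false, hfalse, htrue]

end PhiK

/-- In the construction with `k` extra variables, with
`n = |enc(φ')|` and `w = (1/3)^{n+j+k+1}`: `Z(enc(φ')·0) = w` and
`Z(enc(φ')·1) = w · 2^{k-1} · #(φ)`.  Consequently `p(0 | enc(φ')) = 1` if `φ` is
unsatisfiable, and `p(0 | enc(φ')) ≤ 1/(1 + 2^{k-1})` if `φ` is satisfiable. -/
theorem stmt8 (enc : Fm → List Bool)
    (hpf : ∀ φ ψ : Fm, enc φ <+: enc ψ → φ = ψ)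
    (nv : Fm → ℕ) (hnv : ∀ ψ, onlyUses (nv ψ) ψ)
    (pt : List Bool → ℝ≥0∞)
    (hpt1 : ∀ (ψ : Fm) (a : List Bool), a.length = nv ψ → satL a ψ →
      pt (enc ψ ++ a) = (1 / 3 : ℝ≥0∞) ^ ((enc ψ ++ a).length + 1))
    (hpt0 : ∀ x : List Bool,
      (¬ ∃ (ψ : Fm) (a : List Bool), x = enc ψ ++ a ∧ a.length = nv ψ ∧ satL a ψ) →
      pt x = 0)
    (φ : Fm) (j k : ℕ) (hk : 1 ≤ k) (hj : nv φ = j)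
    (hj' : nv (phiK j k φ) = j + k)
    (Z : List Bool → ℝ≥0∞)
    (hZ : ∀ y : List Bool, Z y = ∑' x : {x : List Bool // y <+: x}, pt x.1)
    (n : ℕ) (hn : n = (enc (phiK j k φ)).length)
    (w : ℝ≥0∞) (hw : w = (1 / 3 : ℝ≥0∞) ^ (n + j + k + 1)) :
    Z (enc (phiK j k φ) ++ [false]) = w ∧
    Z (enc (phiK j k φ) ++ [true]) = w * 2 ^ (k - 1) * (countSat j φ : ℝ≥0∞) ∧
    (countSat j φ = 0 →
      Z (enc (phiK j k φ) ++ [false]) / Z (enc (phiK j k φ)) = 1) ∧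
    (1 ≤ countSat j φ →
      Z (enc (phiK j k φ) ++ [false]) / Z (enc (phiK j k φ))
        ≤ 1 / (1 + (2 : ℝ≥0∞) ^ (k - 1))) := by
  obtain ⟨k, rfl⟩ : ∃ k', k = k' + 1 := ⟨k - 1, by omega⟩
  set E := enc (phiK j (k + 1) φ)
  have hφ : onlyUses j φ := hj ▸ hnv φ
  have hZE : ∀ u, Z (E ++ u)
      = #{a : Fin (j + k + 1) → Bool | satN a (phiK j (k + 1) φ) ∧ u <+: List.ofFn a} * w := by
    intro u
    rw [hZ, tsum_prefix_enc_append hpf hpt1 hpt0 (m := j + k + 1) hj', hw, hn]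
    congr 2
    simp only [E]
    omega
  have hw0 : w ≠ 0 := by simp [hw]
  have hwtop : w ≠ ⊤ := by simp [hw]
  have hratio : Z (E ++ [false]) / Z E = 1 / (1 + countSat j φ * 2 ^ k) := by
    rw [hZE, ← E.append_nil, hZE]
    simp only [List.nil_prefix, and_true, card_satN_phiK_head_false hφ, card_satN_phiK hφ]
    push_cast
    exact ENNReal.mul_div_mul_right _ _ hw0 hwtop
  simp only [Nat.add_sub_cancel]
  refine ⟨?_, ?_, fun h0 => ?_, fun h1 => ?_⟩
  · rw [hZE, card_satN_phiK_head_false hφ, Nat.cast_one, one_mul]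
  · rw [hZE, card_satN_phiK_head_true hφ]
    push_cast
    ring
  · simp [hratio, h0]
  · rw [hratio]
    gcongr
    exact le_mul_of_one_le_left' (by exact_mod_cast h1)
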